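/- arXiv:1112.1633 — 2 statements merged into one kernel-verified Lean document; each statement's English description precedes it below -/
import Mathlib

section
/- The derivatives of the SPPS solutions admit the representations u1' = (u0'/u0) u1 + (1/(u0 p)) Σ_{k=1}^∞ λᵏ X̃⁽²ᵏ⁻¹⁾ and u2' = (u0'/u0) u2 + (1/(u0 p)) Σ_{k=0}^∞ λᵏ X⁽²ᵏ⁾ on (a,b), where the series converge uniformly on [a,b]. -/
/-
Each formal power is a primitive of the previous one times a weight bounded by some `M` on
`[a, b]`, so `‖X⁽ⁿ⁾‖ ≤ (M (b - a))ⁿ / n!`. Since only `λᵏ` accompanies `X⁽²ᵏ⁺ⁱ⁾`, both series and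
their termwise derivatives are dominated by multiples of `∑ (‖λ‖ M² (b - a)²)ᵏ / k!`; hence they
converge uniformly and may be differentiated term by term. Differentiating `∑ λᵏ X̃⁽²ᵏ⁾` kills the
constant term and leaves `(u0² p)⁻¹ ∑ λᵏ⁺¹ X̃⁽²ᵏ⁺¹⁾`, and the product rule applied to `u0 · ∑ …`
gives the stated formulas (similarly for `u2`).
-/

open Set MeasureTheory Filter Finset
open scoped Topology Interval

/-- Formal powers defined by recursive integration: at step `n+1` the integrand is
multiplied by `wOdd` if `n+1` is odd and by `wEven` if `n+1` is even. -/
noncomputable def formalPower (wOdd wEven : ℝ → ℂ) (x0 : ℝ) : ℕ → ℝ → ℂ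
  | 0 => fun _ => 1
  | n + 1 => fun x => ∫ s in x0..x,
      formalPower wOdd wEven x0 n s * (if (n + 1) % 2 = 1 then wOdd s else wEven s)

/-- The formal powers `X̃⁽ⁿ⁾` associated with the Sturm-Liouville equation
`(p u')' + q u = λ r u` and a particular solution `u0`. -/
noncomputable def XtSL (p r u0 : ℝ → ℂ) (x0 : ℝ) : ℕ → ℝ → ℂ :=
  formalPower (fun s => u0 s ^ 2 * r s) (fun s => 1 / (u0 s ^ 2 * p s)) x0

/-- The formal powers `X⁽ⁿ⁾`. -/
noncomputable def XSL (p r u0 : ℝ → ℂ) (x0 : ℝ) : ℕ → ℝ → ℂ :=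
  formalPower (fun s => 1 / (u0 s ^ 2 * p s)) (fun s => u0 s ^ 2 * r s) x0

/-- `u` solves `(p u')' + q u = g` on `(a,b)`, with the implied differentiability. -/
def SolvesSL (p q : ℝ → ℂ) (a b : ℝ) (u g : ℝ → ℂ) : Prop :=
  (∀ x ∈ Set.Ioo a b, DifferentiableAt ℝ u x) ∧
  (∀ x ∈ Set.Ioo a b, DifferentiableAt ℝ (fun y => p y * deriv u y) x) ∧
  ∀ x ∈ Set.Ioo a b, deriv (fun y => p y * deriv u y) x + q x * u x = g x

/-- The first SPPS solution `u1 = u0 ∑ λᵏ X̃⁽²ᵏ⁾`. -/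
noncomputable def u1SPPS (p r u0 : ℝ → ℂ) (x0 : ℝ) (lam : ℂ) (x : ℝ) : ℂ :=
  u0 x * ∑' k : ℕ, lam ^ k * XtSL p r u0 x0 (2 * k) x

/-- The second SPPS solution `u2 = u0 ∑ λᵏ X⁽²ᵏ⁺¹⁾`. -/
noncomputable def u2SPPS (p r u0 : ℝ → ℂ) (x0 : ℝ) (lam : ℂ) (x : ℝ) : ℂ :=
  u0 x * ∑' k : ℕ, lam ^ k * XSL p r u0 x0 (2 * k + 1) x

open scoped Nat

noncomputable def formalWeight (wOdd wEven : ℝ → ℂ) (n : ℕ) (s : ℝ) : ℂ :=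
  if n % 2 = 1 then wOdd s else wEven s

lemma norm_intervalIntegral_le_of_norm_le_mul_pow {E : Type*} [NormedAddCommGroup E]
    [NormedSpace ℝ E] {g : ℝ → E} {x0 x C : ℝ} (n : ℕ)
    (hg : ContinuousOn g (uIcc x0 x)) (hgC : ∀ s ∈ Ι x0 x, ‖g s‖ ≤ C * |s - x0| ^ n) :
    ‖∫ s in x0..x, g s‖ ≤ C * (|x - x0| ^ (n + 1) / (n + 1)) := by
  have hgi : IntegrableOn (fun s => ‖g s‖) (Ι x0 x) :=
    (hg.norm.integrableOn_compact isCompact_uIcc).mono_set uIoc_subset_uIcc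
  have hCi : IntegrableOn (fun s => C * |s - x0| ^ n) (Ι x0 x) :=
    Continuous.integrableOn_uIoc (μ := volume) (by fun_prop)
  calc ‖∫ s in x0..x, g s‖ ≤ ∫ s in Ι x0 x, ‖g s‖ :=
        intervalIntegral.norm_integral_le_integral_norm_uIoc
    _ ≤ ∫ s in Ι x0 x, C * |s - x0| ^ n := setIntegral_mono_on hgi hCi measurableSet_uIoc hgC
    _ = C * (|x - x0| ^ (n + 1) / (n + 1)) := by
        rw [integral_const_mul, integral_pow_abs_sub_uIoc]

section FormalPower

variable {a b x0 : ℝ} {wOdd wEven : ℝ → ℂ}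

lemma formalPower_succ (n : ℕ) :
    formalPower wOdd wEven x0 (n + 1) = fun x =>
      ∫ s in x0..x, formalPower wOdd wEven x0 n s * formalWeight wOdd wEven (n + 1) s :=
  rfl

lemma continuousOn_formalWeight (hO : ContinuousOn wOdd (Icc a b))
    (hE : ContinuousOn wEven (Icc a b)) (n : ℕ) :
    ContinuousOn (formalWeight wOdd wEven n) (Icc a b) := by
  unfold formalWeight
  split_ifs <;> assumption

lemma continuousOn_formalPower (hO : ContinuousOn wOdd (Icc a b))
    (hE : ContinuousOn wEven (Icc a b)) (hx0 : x0 ∈ Icc a b) (n : ℕ) :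
    ContinuousOn (formalPower wOdd wEven x0 n) (Icc a b) := by
  induction n with
  | zero => exact continuousOn_const
  | succ n ih =>
    have hab : a ≤ b := hx0.1.trans hx0.2
    have hint := ((ih.mul (continuousOn_formalWeight hO hE (n + 1))).mono
      (uIcc_of_le hab).subset).intervalIntegrable (μ := volume)
    rw [formalPower_succ, ← uIcc_of_le hab]
    exact intervalIntegral.continuousOn_primitive_interval' hint (by rwa [uIcc_of_le hab])

lemma norm_formalPower_le {M : ℝ} (hM : 0 ≤ M) (hO : ContinuousOn wOdd (Icc a b))
    (hE : ContinuousOn wEven (Icc a b))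
    (hw : ∀ n, ∀ x ∈ Icc a b, ‖formalWeight wOdd wEven n x‖ ≤ M) (hx0 : x0 ∈ Icc a b) (n : ℕ) :
    ∀ x ∈ Icc a b, ‖formalPower wOdd wEven x0 n x‖ ≤ M ^ n * |x - x0| ^ n / n ! := by
  induction n with
  | zero => simp [formalPower]
  | succ n ih =>
    intro x hx
    have hsub := uIcc_subset_Icc hx0 hx
    have hbound : ∀ s ∈ Ι x0 x, ‖formalPower wOdd wEven x0 n s * formalWeight wOdd wEven (n + 1) s‖
        ≤ M ^ (n + 1) / n ! * |s - x0| ^ n := by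
      intro s hs
      have hs' := hsub (uIoc_subset_uIcc hs)
      rw [norm_mul]
      calc _ ≤ M ^ n * |s - x0| ^ n / n ! * M :=
            mul_le_mul (ih s hs') (hw _ s hs') (norm_nonneg _)
              (by positivity)
        _ = _ := by ring
    rw [formalPower_succ]
    refine (norm_intervalIntegral_le_of_norm_le_mul_pow n
      (((continuousOn_formalPower hO hE hx0 n).mul
        (continuousOn_formalWeight hO hE (n + 1))).mono hsub) hbound).trans_eq ?_
    rw [Nat.factorial_succ]
    push_cast
    field_simp

lemma exists_norm_formalWeight_le (hO : ContinuousOn wOdd (Icc a b))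
    (hE : ContinuousOn wEven (Icc a b)) :
    ∃ M, 0 ≤ M ∧ ∀ n, ∀ x ∈ Icc a b, ‖formalWeight wOdd wEven n x‖ ≤ M := by
  obtain ⟨MO, hMO⟩ := isCompact_Icc.exists_bound_of_continuousOn hO
  obtain ⟨ME, hME⟩ := isCompact_Icc.exists_bound_of_continuousOn hE
  refine ⟨max (max MO ME) 0, le_max_right _ _, fun n x hx => ?_⟩
  unfold formalWeight
  split_ifs
  · exact (hMO x hx).trans ((le_max_left _ _).trans (le_max_left _ _))
  · exact (hME x hx).trans ((le_max_right _ _).trans (le_max_left _ _))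

lemma exists_norm_formalPower_le (hO : ContinuousOn wOdd (Icc a b))
    (hE : ContinuousOn wEven (Icc a b)) (hx0 : x0 ∈ Icc a b) :
    ∃ C, 0 ≤ C ∧ ∀ n, ∀ x ∈ Icc a b, ‖formalPower wOdd wEven x0 n x‖ ≤ C ^ n / n ! := by
  obtain ⟨M, hM, hMw⟩ := exists_norm_formalWeight_le hO hE
  refine ⟨M * (b - a), mul_nonneg hM (by linarith [hx0.1, hx0.2]), fun n x hx => ?_⟩
  have hdist : |x - x0| ≤ b - a :=
    abs_sub_le_iff.2 ⟨by linarith [hx.2, hx0.1], by linarith [hx.1, hx0.2]⟩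
  refine (norm_formalPower_le hM hO hE hMw hx0 n x hx).trans ?_
  rw [mul_pow]
  gcongr

lemma exists_summable_bound_formalPowerSeries (hO : ContinuousOn wOdd (Icc a b))
    (hE : ContinuousOn wEven (Icc a b)) (hx0 : x0 ∈ Icc a b) (lam : ℂ) (i j : ℕ) :
    ∃ u : ℕ → ℝ, Summable u ∧
      ∀ k, ∀ x ∈ Icc a b, ‖lam ^ (k + j) * formalPower wOdd wEven x0 (2 * k + i) x‖ ≤ u k := by
  obtain ⟨C, hC, hfp⟩ := exists_norm_formalPower_le hO hE hx0
  refine ⟨fun k => ‖lam‖ ^ j * C ^ i * ((‖lam‖ * C ^ 2) ^ k / k !),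
    (Real.summable_pow_div_factorial _).mul_left _, fun k x hx => ?_⟩
  rw [norm_mul, norm_pow]
  calc _ ≤ ‖lam‖ ^ (k + j) * (C ^ (2 * k + i) / k !) := by
        gcongr
        refine (hfp _ x hx).trans ?_
        gcongr
        omega
    _ = ‖lam‖ ^ j * C ^ i * ((‖lam‖ * C ^ 2) ^ k / k !) := by ring

lemma tendstoUniformlyOn_formalPowerSeries (hO : ContinuousOn wOdd (Icc a b))
    (hE : ContinuousOn wEven (Icc a b)) (hx0 : x0 ∈ Icc a b) (lam : ℂ) (i j : ℕ) :
    TendstoUniformlyOn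
      (fun N x => ∑ k ∈ range N, lam ^ (k + j) * formalPower wOdd wEven x0 (2 * k + i) x)
      (fun x => ∑' k, lam ^ (k + j) * formalPower wOdd wEven x0 (2 * k + i) x) atTop (Icc a b) :=
  let ⟨_, hu, hbound⟩ := exists_summable_bound_formalPowerSeries hO hE hx0 lam i j
  tendstoUniformlyOn_tsum_nat hu hbound

lemma formalWeight_two_mul_add (k n : ℕ) :
    formalWeight wOdd wEven (2 * k + n) = formalWeight wOdd wEven n := by
  ext s
  simp [formalWeight, Nat.add_mod]

lemma hasDerivAt_formalPower_succ (hO : ContinuousOn wOdd (Icc a b))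
    (hE : ContinuousOn wEven (Icc a b)) (hx0 : x0 ∈ Icc a b) (n : ℕ) {x : ℝ}
    (hx : x ∈ Ioo a b) :
    HasDerivAt (formalPower wOdd wEven x0 (n + 1))
      (formalPower wOdd wEven x0 n x * formalWeight wOdd wEven (n + 1) x) x := by
  have hg := (continuousOn_formalPower hO hE hx0 n).mul (continuousOn_formalWeight hO hE (n + 1))
  have hgIoo := hg.mono Ioo_subset_Icc_self
  rw [formalPower_succ]
  exact intervalIntegral.integral_hasDerivAt_right
    ((hg.mono (uIcc_subset_Icc hx0 (Ioo_subset_Icc_self hx))).intervalIntegrable)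
    (hgIoo.stronglyMeasurableAtFilter isOpen_Ioo x hx)
    (hgIoo.continuousAt (isOpen_Ioo.mem_nhds hx))

lemma hasDerivAt_tsum_formalPowerSeries (hO : ContinuousOn wOdd (Icc a b))
    (hE : ContinuousOn wEven (Icc a b)) (hx0 : x0 ∈ Icc a b) (lam : ℂ) (i j : ℕ) {x : ℝ}
    (hx : x ∈ Ioo a b) :
    HasDerivAt (fun y => ∑' k, lam ^ (k + j) * formalPower wOdd wEven x0 (2 * k + i + 1) y)
      ((∑' k, lam ^ (k + j) * formalPower wOdd wEven x0 (2 * k + i) x) *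
        formalWeight wOdd wEven (i + 1) x) x := by
  obtain ⟨u, hu, hbound⟩ := exists_summable_bound_formalPowerSeries hO hE hx0 lam i j
  obtain ⟨v, hv, hbound'⟩ := exists_summable_bound_formalPowerSeries hO hE hx0 lam (i + 1) j
  obtain ⟨M, -, hMw⟩ := exists_norm_formalWeight_le hO hE
  have hderiv : ∀ k, ∀ y ∈ Ioo a b,
      HasDerivAt (fun y => lam ^ (k + j) * formalPower wOdd wEven x0 (2 * k + i + 1) y)
        (lam ^ (k + j) * formalPower wOdd wEven x0 (2 * k + i) y *
          formalWeight wOdd wEven (i + 1) y) y := by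
    intro k y hy
    simpa only [add_assoc, formalWeight_two_mul_add, mul_assoc] using
      (hasDerivAt_formalPower_succ hO hE hx0 (2 * k + i) hy).const_mul (lam ^ (k + j))
  have hderiv_le : ∀ k, ∀ y ∈ Ioo a b, ‖lam ^ (k + j) * formalPower wOdd wEven x0 (2 * k + i) y *
      formalWeight wOdd wEven (i + 1) y‖ ≤ u k * M := by
    intro k y hy
    have hy' := Ioo_subset_Icc_self hy
    rw [norm_mul]
    exact mul_le_mul (hbound k y hy') (hMw _ y hy') (norm_nonneg _)
      ((norm_nonneg _).trans (hbound k y hy'))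
  have hsum : Summable fun k => lam ^ (k + j) * formalPower wOdd wEven x0 (2 * k + i + 1) x :=
    .of_norm_bounded hv fun k => hbound' k x (Ioo_subset_Icc_self hx)
  simpa only [tsum_mul_right] using hasDerivAt_tsum_of_isPreconnected (hu.mul_right M)
    isOpen_Ioo isPreconnected_Ioo hderiv hderiv_le hx hsum hx

lemma hasDerivAt_tsum_formalPower_odd (hO : ContinuousOn wOdd (Icc a b))
    (hE : ContinuousOn wEven (Icc a b)) (hx0 : x0 ∈ Icc a b) (lam : ℂ) {x : ℝ}
    (hx : x ∈ Ioo a b) :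
    HasDerivAt (fun y => ∑' k, lam ^ k * formalPower wOdd wEven x0 (2 * k + 1) y)
      ((∑' k, lam ^ k * formalPower wOdd wEven x0 (2 * k) x) * wOdd x) x := by
  simpa [formalWeight] using hasDerivAt_tsum_formalPowerSeries hO hE hx0 lam 0 0 hx

lemma hasDerivAt_tsum_formalPower_even (hO : ContinuousOn wOdd (Icc a b))
    (hE : ContinuousOn wEven (Icc a b)) (hx0 : x0 ∈ Icc a b) (lam : ℂ) {x : ℝ}
    (hx : x ∈ Ioo a b) :
    HasDerivAt (fun y => ∑' k, lam ^ k * formalPower wOdd wEven x0 (2 * k) y)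
      ((∑' k, lam ^ (k + 1) * formalPower wOdd wEven x0 (2 * k + 1) x) * wEven x) x := by
  obtain ⟨u, hu, hbound⟩ := exists_summable_bound_formalPowerSeries hO hE hx0 lam 0 0
  have hshift : ∀ y ∈ Ioo a b, ∑' k, lam ^ k * formalPower wOdd wEven x0 (2 * k) y =
      1 + ∑' k, lam ^ (k + 1) * formalPower wOdd wEven x0 (2 * k + 1 + 1) y := by
    intro y hy
    have hsum : Summable fun k => lam ^ k * formalPower wOdd wEven x0 (2 * k) y :=
      .of_norm_bounded hu fun k => by simpa using hbound k y (Ioo_subset_Icc_self hy)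
    rw [hsum.tsum_eq_zero_add]
    simp [formalPower, mul_add]
  have h := (hasDerivAt_tsum_formalPowerSeries hO hE hx0 lam 1 1 hx).const_add 1
  simp only [formalWeight, Nat.reduceAdd, Nat.reduceMod] at h
  exact h.congr_of_eventuallyEq (eventually_of_mem (isOpen_Ioo.mem_nhds hx) hshift)

end FormalPower

lemma deriv_mul_eq_of_hasDerivAt {u0 S : ℝ → ℂ} {p T : ℂ} {x : ℝ}
    (hu0 : DifferentiableAt ℝ u0 x) (hu0x : u0 x ≠ 0)
    (hS : HasDerivAt S (T * (1 / (u0 x ^ 2 * p))) x) :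
    deriv (fun y => u0 y * S y) x = deriv u0 x / u0 x * (u0 x * S x) + 1 / (u0 x * p) * T := by
  rw [(hu0.hasDerivAt.fun_mul hS).deriv]
  rcases eq_or_ne p 0 with rfl | hp
  · simp only [mul_zero, div_zero, zero_mul, add_zero]
    field_simp
  · field_simp

theorem spps_derivative_representation_general
    (a b x0 : ℝ) (p q r u0 : ℝ → ℂ) (lam : ℂ)
    (hu0ne : ∀ x ∈ Set.Icc a b, u0 x ≠ 0)
    (hu0sol : SolvesSL p q a b u0 (fun _ => 0))
    (hc1 : ContinuousOn (fun x => u0 x ^ 2 * r x) (Set.Icc a b))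
    (hc2 : ContinuousOn (fun x => 1 / (u0 x ^ 2 * p x)) (Set.Icc a b))
    (hx0 : x0 ∈ Set.Icc a b) :
    TendstoUniformlyOn
      (fun N x => ∑ k ∈ Finset.range N, lam ^ (k + 1) * XtSL p r u0 x0 (2 * k + 1) x)
      (fun x => ∑' k : ℕ, lam ^ (k + 1) * XtSL p r u0 x0 (2 * k + 1) x)
      Filter.atTop (Set.Icc a b) ∧
    TendstoUniformlyOn
      (fun N x => ∑ k ∈ Finset.range N, lam ^ k * XSL p r u0 x0 (2 * k) x)
      (fun x => ∑' k : ℕ, lam ^ k * XSL p r u0 x0 (2 * k) x)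
      Filter.atTop (Set.Icc a b) ∧
    (∀ x ∈ Set.Ioo a b,
      deriv (u1SPPS p r u0 x0 lam) x =
        (deriv u0 x / u0 x) * u1SPPS p r u0 x0 lam x +
          (1 / (u0 x * p x)) * ∑' k : ℕ, lam ^ (k + 1) * XtSL p r u0 x0 (2 * k + 1) x) ∧
    (∀ x ∈ Set.Ioo a b,
      deriv (u2SPPS p r u0 x0 lam) x =
        (deriv u0 x / u0 x) * u2SPPS p r u0 x0 lam x +
          (1 / (u0 x * p x)) * ∑' k : ℕ, lam ^ k * XSL p r u0 x0 (2 * k) x) := by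
  refine ⟨tendstoUniformlyOn_formalPowerSeries hc1 hc2 hx0 lam 1 1,
    tendstoUniformlyOn_formalPowerSeries hc2 hc1 hx0 lam 0 0,
    fun x hx => ?_, fun x hx => ?_⟩
  · exact deriv_mul_eq_of_hasDerivAt (hu0sol.1 x hx) (hu0ne x (Ioo_subset_Icc_self hx))
      (hasDerivAt_tsum_formalPower_even hc1 hc2 hx0 lam hx)
  · exact deriv_mul_eq_of_hasDerivAt (hu0sol.1 x hx) (hu0ne x (Ioo_subset_Icc_self hx))
      (hasDerivAt_tsum_formalPower_odd hc2 hc1 hx0 lam hx)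

theorem spps_derivative_representation
    (a b x0 : ℝ) (hab : a < b) (p q r u0 : ℝ → ℂ) (lam : ℂ)
    (hu0ne : ∀ x ∈ Set.Icc a b, u0 x ≠ 0)
    (hu0sol : SolvesSL p q a b u0 (fun _ => 0))
    (hc1 : ContinuousOn (fun x => u0 x ^ 2 * r x) (Set.Icc a b))
    (hc2 : ContinuousOn (fun x => 1 / (u0 x ^ 2 * p x)) (Set.Icc a b))
    (hx0 : x0 ∈ Set.Icc a b) (hpc : ContinuousAt p x0) (hp0 : p x0 ≠ 0) :
    TendstoUniformlyOn
      (fun N x => ∑ k ∈ Finset.range N, lam ^ (k + 1) * XtSL p r u0 x0 (2 * k + 1) x)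
      (fun x => ∑' k : ℕ, lam ^ (k + 1) * XtSL p r u0 x0 (2 * k + 1) x)
      Filter.atTop (Set.Icc a b) ∧
    TendstoUniformlyOn
      (fun N x => ∑ k ∈ Finset.range N, lam ^ k * XSL p r u0 x0 (2 * k) x)
      (fun x => ∑' k : ℕ, lam ^ k * XSL p r u0 x0 (2 * k) x)
      Filter.atTop (Set.Icc a b) ∧
    (∀ x ∈ Set.Ioo a b,
      deriv (u1SPPS p r u0 x0 lam) x =
        (deriv u0 x / u0 x) * u1SPPS p r u0 x0 lam x +
          (1 / (u0 x * p x)) * ∑' k : ℕ, lam ^ (k + 1) * XtSL p r u0 x0 (2 * k + 1) x) ∧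
    (∀ x ∈ Set.Ioo a b,
      deriv (u2SPPS p r u0 x0 lam) x =
        (deriv u0 x / u0 x) * u2SPPS p r u0 x0 lam x +
          (1 / (u0 x * p x)) * ∑' k : ℕ, lam ^ k * XSL p r u0 x0 (2 * k) x) :=
  spps_derivative_representation_general a b x0 p q r u0 lam hu0ne hu0sol hc1 hc2 hx0
end

section
/- For normal incidence (β = 0) in unabsorbent media, the reflection and transmission coefficients satisfy the energy conservation relation |R|² + n2 |T|² / n1 = 1. That is, if u : ℝ → ℂ is a continuously differentiable solution of u'' + k² n(x)² u = 0 on ℝ with u(x) = e^{−i k n1 x} + R e^{i k n1 x} for x ≤ 0 and u(x) = T e^{−i k n2 x} for x ≥ d, then |R|² + (n2/n1) |T|² = 1. -/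
open Set Filter
open scoped Topology

/-
The flux `Im (conj u · u')` is the Wronskian of `conj u` and `u` divided by `2i`; since the
potential `k² n²` is real, both solve the same equation and the flux is constant. On a region where
`u = A e^{-iκx} + B e^{iκx}` the cross terms of the flux cancel and it equals `κ (|B|² - |A|²)`.
Comparing the values to the left of the slab (`κ = k n₁`, `A = 1`, `B = R`) and to the right of
it (`κ = k n₂`, `A = T`, `B = 0`) gives `k n₁ (|R|² - 1) = -k n₂ |T|²`.
-/

open Complex

noncomputable def planeWave (κ : ℝ) (A B : ℂ) (x : ℝ) : ℂ :=
  A * cexp (-I * κ * x) + B * cexp (I * κ * x)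

noncomputable def flux (u : ℝ → ℂ) (x : ℝ) : ℝ :=
  (star (u x) * deriv u x).im

lemma hasDerivAt_cexp_mul_ofReal (c : ℂ) (x : ℝ) :
    HasDerivAt (fun y : ℝ => cexp (c * y)) (c * cexp (c * x)) x := by
  simpa [mul_comm] using (((hasDerivAt_id (x : ℂ)).const_mul c).cexp).comp_ofReal

lemma hasDerivAt_planeWave (κ : ℝ) (A B : ℂ) (x : ℝ) :
    HasDerivAt (planeWave κ A B)
      (I * κ * (B * cexp (I * κ * x) - A * cexp (-I * κ * x))) x := by
  refine (((hasDerivAt_cexp_mul_ofReal (-I * κ) x).const_mul A).add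
    ((hasDerivAt_cexp_mul_ofReal (I * κ) x).const_mul B)).congr_deriv ?_
  ring_nf

lemma im_star_add_mul_sub (κ : ℝ) (a b : ℂ) :
    (star (a + b) * (I * κ * (b - a))).im = κ * (‖b‖ ^ 2 - ‖a‖ ^ 2) := by
  simp only [Complex.sq_norm, normSq_apply, star_def, mul_im, mul_re, conj_re, conj_im, add_re,
    add_im, sub_re, sub_im, I_re, I_im, ofReal_re, ofReal_im]
  ring

lemma flux_eq_of_eventuallyEq_planeWave {u : ℝ → ℂ} {x κ : ℝ} {A B : ℂ}
    (h : u =ᶠ[𝓝 x] planeWave κ A B) : flux u x = κ * (‖B‖ ^ 2 - ‖A‖ ^ 2) := by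
  rw [flux, h.deriv_eq, (hasDerivAt_planeWave κ A B x).deriv, h.eq_of_nhds, planeWave,
    im_star_add_mul_sub]
  simp [norm_exp]

lemma flux_eq_of_ode {u : ℝ → ℂ} {q : ℝ → ℝ} (hu : Differentiable ℝ u)
    (hu' : Differentiable ℝ (deriv u)) (hq : ∀ x, deriv (deriv u) x + q x * u x = 0)
    (a b : ℝ) : flux u a = flux u b := by
  have hderiv : ∀ x, HasDerivAt (flux u) 0 x := by
    intro x
    have h : HasDerivAt (flux u)
        (star (deriv u x) * deriv u x + star (u x) * deriv (deriv u) x).im x :=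
      imCLM.hasFDerivAt.comp_hasDerivAt x ((hu x).hasDerivAt.star.mul (hu' x).hasDerivAt)
    refine h.congr_deriv ?_
    rw [eq_neg_of_add_eq_zero_left (hq x)]
    simp only [add_im, mul_im, mul_re, neg_re, neg_im, star_def, conj_re, conj_im, ofReal_re,
      ofReal_im]
    ring
  exact is_const_of_deriv_eq_zero (fun x => (hderiv x).differentiableAt)
    (fun x => (hderiv x).deriv) a b

theorem energy_conservation_normal_incidence_general
    (k d n1 n2 : ℝ) (hk : 0 < k)
    (n : ℝ → ℝ) (hn1pos : 0 < n1)
    (u : ℝ → ℂ) (R T : ℂ)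
    (hud : Differentiable ℝ u) (hud2 : Differentiable ℝ (deriv u))
    (hueq : ∀ x : ℝ,
      deriv (deriv u) x + (k : ℂ) ^ 2 * (n x : ℂ) ^ 2 * u x = 0)
    (huleft : ∀ x ≤ (0 : ℝ),
      u x = Complex.exp (-Complex.I * (k : ℂ) * (n1 : ℂ) * x) +
        R * Complex.exp (Complex.I * (k : ℂ) * (n1 : ℂ) * x))
    (huright : ∀ x ≥ d,
      u x = T * Complex.exp (-Complex.I * (k : ℂ) * (n2 : ℂ) * x)) :
    ‖R‖ ^ 2 + n2 * ‖T‖ ^ 2 / n1 = 1 := by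
  have hleft : u =ᶠ[𝓝 (-1)] planeWave (k * n1) 1 R := by
    filter_upwards [Iio_mem_nhds (show (-1 : ℝ) < 0 by norm_num)] with x hx
    simp [planeWave, huleft x hx.le, mul_assoc]
  have hright : u =ᶠ[𝓝 (d + 1)] planeWave (k * n2) T 0 := by
    filter_upwards [Ioi_mem_nhds (lt_add_one d)] with x hx
    simp [planeWave, huright x hx.le, mul_assoc]
  have hflux := flux_eq_of_ode hud hud2 (q := fun x => k ^ 2 * n x ^ 2)
    (fun x => by push_cast; exact hueq x) (-1) (d + 1)
  rw [flux_eq_of_eventuallyEq_planeWave hleft, flux_eq_of_eventuallyEq_planeWave hright,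
    norm_one, norm_zero] at hflux
  field_simp
  nlinarith [mul_pos hk hn1pos]

theorem energy_conservation_normal_incidence
    (k d n1 n2 : ℝ) (hk : 0 < k) (hd : 0 < d)
    (n : ℝ → ℝ) (hn : Continuous n) (hnpos : ∀ x, 0 < n x)
    (hn1 : ∀ x ≤ (0 : ℝ), n x = n1) (hn2 : ∀ x ≥ d, n x = n2)
    (hn1pos : 0 < n1) (hn2pos : 0 < n2)
    (u : ℝ → ℂ) (R T : ℂ)
    (hud : Differentiable ℝ u) (hud2 : Differentiable ℝ (deriv u))
    (hueq : ∀ x : ℝ,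
      deriv (deriv u) x + (k : ℂ) ^ 2 * (n x : ℂ) ^ 2 * u x = 0)
    (huleft : ∀ x ≤ (0 : ℝ),
      u x = Complex.exp (-Complex.I * (k : ℂ) * (n1 : ℂ) * x) +
        R * Complex.exp (Complex.I * (k : ℂ) * (n1 : ℂ) * x))
    (huright : ∀ x ≥ d,
      u x = T * Complex.exp (-Complex.I * (k : ℂ) * (n2 : ℂ) * x)) :
    ‖R‖ ^ 2 + n2 * ‖T‖ ^ 2 / n1 = 1 :=
  energy_conservation_normal_incidence_general k d n1 n2 hk n hn1pos u R T hud hud2 hueq huleft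
    huright
end
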